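/- arXiv:2304.11493 — 2 statements merged into one kernel-verified Lean document; each statement's English description precedes it below -/
import Mathlib

section
/- Let R be a commutative Noetherian ring, I a proper ideal of R, M a finitely generated R-module such that Tor_i^R(R/I, M) = 0 for all i > 0, and N an R-module with depth_I(N) > 0 (equivalently, H^0_I(N) = 0). Then there is an injective R-linear map from Ext^1_R(R/I, Hom_R(M, H^1_I(N))) into Ext^1_R(M/IM, H^1_I(N)). (Under these hypotheses Hom_R(M, H^1_I(N)) is isomorphic to the first generalized local cohomology module H^1_I(M,N), so this says Ext^1_R(R/I, H^1_I(M,N)) embeds into Ext^1_R(M/IM, H^1_I(N)).) -/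
open CategoryTheory CategoryTheory.Limits

universe u

noncomputable section

/-- An `R`-module `W` is *weakly Laskerian* if the set of associated primes of `W/U`
is finite for every submodule `U ⊆ W`. -/
def IsWeaklyLaskerian (R : Type u) [CommRing R] (M : Type u)
    [AddCommGroup M] [Module R M] : Prop :=
  ∀ U : Submodule R M, (associatedPrimes R (M ⧸ U)).Finite

/-- `Ext^i_R(A, B)` as an `R`-module, for `A B : ModuleCat R`. -/
def extModule (R : Type u) [CommRing R] (i : ℕ) (A B : ModuleCat.{u} R) : ModuleCat.{u} R :=
  ((Ext R (ModuleCat.{u} R) i).obj (Opposite.op A)).obj B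

/-- An `R`-module `W` is *`I`-weakly cofinite* if `Supp W ⊆ V(I)` and
`Ext^i_R(R/I, W)` is weakly Laskerian for all `i ≥ 0`. -/
def IsWeaklyCofinite (R : Type u) [CommRing R] (I : Ideal R) (M : Type u)
    [AddCommGroup M] [Module R M] : Prop :=
  Module.support R M ⊆ PrimeSpectrum.zeroLocus (I : Set R) ∧
    ∀ i : ℕ, IsWeaklyLaskerian R
      (extModule R i (ModuleCat.of R (R ⧸ I)) (ModuleCat.of R M))

/-!
Let `0 → K → P₀ → R/I → 0` start a projective resolution of `R/I`, and `H = H¹_I(N)`.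
Then `Ext¹(R/I, Hom(M, H))` is `Hom(K, Hom(M, H)) = Hom(K ⊗ M, H)` modulo restrictions of
maps on `P₀ ⊗ M`. Balancing `Tor₁(R/I, M) = 0` against a projective resolution of `M` shows
that `K ⊗ M → P₀ ⊗ M` is injective, so `K ⊗ M` is the kernel of the surjection
`P₀ ⊗ M → R/I ⊗ M ≅ M/IM`. Finally, for any surjection `F → X` with kernel `K'`, maps
`K' → H` modulo restrictions of maps `F → H` embed into `Ext¹(X, H)`: comparing with a
projective resolution of `X`, this is the injectivity of the connecting map
`Hom(K', H) / Hom(F, H) → Ext¹(X, H)`.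
-/

open LinearMap
open scoped TensorProduct

section LinearAlgebra

variable {R : Type*} [CommRing R]

theorem LinearMap.lcomp_comp_lcomp_eq_zero {M N P Y : Type*} [AddCommGroup M] [Module R M]
    [AddCommGroup N] [Module R N] [AddCommGroup P] [Module R P] [AddCommGroup Y] [Module R Y]
    {f : M →ₗ[R] N} {g : N →ₗ[R] P} (h : g ∘ₗ f = 0) : f.lcomp R Y ∘ₗ g.lcomp R Y = 0 := by
  ext β x
  exact congr(β ($h x)).trans β.map_zero

theorem LinearMap.rTensor_lTensor_comm {M N P Q : Type*} [AddCommGroup M] [Module R M]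
    [AddCommGroup N] [Module R N] [AddCommGroup P] [Module R P] [AddCommGroup Q] [Module R Q]
    (f : M →ₗ[R] P) (g : N →ₗ[R] Q) (x : M ⊗[R] N) :
    f.rTensor Q (g.lTensor M x) = g.lTensor P (f.rTensor N x) := by
  rw [← LinearMap.comp_apply, rTensor_comp_lTensor, ← lTensor_comp_rTensor, LinearMap.comp_apply]

theorem LinearMap.codRestrict_surjective_of_range_eq {M N : Type*} [AddCommGroup M] [Module R M]
    [AddCommGroup N] [Module R N] {f : M →ₗ[R] N} {p : Submodule R N} (h : range f = p)
    (hf : ∀ x, f x ∈ p) : Function.Surjective (f.codRestrict p hf) := by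
  rintro ⟨y, hy⟩
  rw [← h] at hy
  obtain ⟨x, rfl⟩ := hy
  exact ⟨x, rfl⟩

theorem LinearMap.exists_comp_eq_of_surjective_of_ker_le {V F Y : Type*} [AddCommGroup V]
    [Module R V] [AddCommGroup F] [Module R F] [AddCommGroup Y] [Module R Y] {σ : V →ₗ[R] F}
    (hσ : Function.Surjective σ) {τ : V →ₗ[R] Y} (h : ker σ ≤ ker τ) :
    ∃ χ : F →ₗ[R] Y, χ ∘ₗ σ = τ :=
  ⟨(ker σ).liftQ τ h ∘ₗ (σ.quotKerEquivOfSurjective hσ).symm.toLinearMap, by ext; simp⟩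

/-- `F` is the pushout of `ker p ← ker π → Q`, so `φ` and `β` glue to `χ`: it is defined on
`ker p × Q` and descends along the surjection `(k, q) ↦ k + f q`. -/
theorem exists_comp_ker_subtype_eq {F X Q Y : Type*} [AddCommGroup F] [Module R F]
    [AddCommGroup X] [Module R X] [AddCommGroup Q] [Module R Q] [AddCommGroup Y] [Module R Y]
    {p : F →ₗ[R] X} {π : Q →ₗ[R] X} {f : Q →ₗ[R] F} {g : ker π →ₗ[R] ker p}
    (hπ : Function.Surjective π) (hf : p ∘ₗ f = π)
    (hg : (ker p).subtype ∘ₗ g = f ∘ₗ (ker π).subtype) {φ : ker p →ₗ[R] Y} {β : Q →ₗ[R] Y}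
    (hβ : β ∘ₗ (ker π).subtype = φ ∘ₗ g) :
    ∃ χ : F →ₗ[R] Y, χ ∘ₗ (ker p).subtype = φ := by
  have hσ : Function.Surjective ((ker p).subtype.coprod f) := by
    intro x
    obtain ⟨q, hq⟩ := hπ (p x)
    refine ⟨(⟨x - f q, ?_⟩, q), by simp⟩
    rw [mem_ker, map_sub, ← LinearMap.comp_apply p f, hf, hq, sub_self]
  have hker : ker ((ker p).subtype.coprod f) ≤ ker (φ.coprod β) := by
    rintro ⟨k, q⟩ hkq
    simp only [mem_ker, coprod_apply, Submodule.coe_subtype] at hkq ⊢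
    have hq : q ∈ ker π := by
      rw [mem_ker, ← hf, LinearMap.comp_apply, eq_neg_of_add_eq_zero_right hkq, map_neg, k.2,
        neg_zero]
    have hgq : g ⟨q, hq⟩ = -k := Subtype.ext <| by
      simpa using congr($hg ⟨q, hq⟩).trans (eq_neg_of_add_eq_zero_right hkq)
    rw [show β q = φ (g ⟨q, hq⟩) from congr($hβ ⟨q, hq⟩), hgq, map_neg, add_neg_cancel]
  obtain ⟨χ, hχ⟩ := exists_comp_eq_of_surjective_of_ker_le hσ hker
  exact ⟨χ, by rw [← coprod_inl (ker p).subtype f, ← comp_assoc, hχ, coprod_inl]⟩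

theorem lTensor_ker_subtype_injective_of_ker_le_range {S₂ S₁ S₀ M A : Type*}
    [AddCommGroup S₂] [Module R S₂] [AddCommGroup S₁] [Module R S₁] [AddCommGroup S₀]
    [Module R S₀] [AddCommGroup M] [Module R M] [AddCommGroup A] [Module R A]
    {d₂ : S₂ →ₗ[R] S₁} {d₁ : S₁ →ₗ[R] S₀} {σ : S₀ →ₗ[R] M} (hd₁ : range d₁ = ker σ)
    (hd : d₁ ∘ₗ d₂ = 0) (h : ker (d₁.lTensor A) ≤ range (d₂.lTensor A)) :
    Function.Injective ((ker σ).subtype.lTensor A) := by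
  have hq := codRestrict_surjective_of_range_eq hd₁ fun x => hd₁ ▸ mem_range_self d₁ x
  set q := d₁.codRestrict (ker σ) _
  have hq₁ : (ker σ).subtype ∘ₗ q = d₁ := rfl
  have hqd : q ∘ₗ d₂ = 0 := by ext x; exact congr($hd x)
  refine (injective_iff_map_eq_zero _).mpr fun x hx => ?_
  obtain ⟨y, rfl⟩ := lTensor_surjective A hq x
  obtain ⟨z, rfl⟩ := h (show y ∈ ker (d₁.lTensor A) by
    rwa [mem_ker, ← hq₁, lTensor_comp_apply])
  rw [← lTensor_comp_apply, hqd, lTensor_zero, LinearMap.zero_apply]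

/-- Both injectivities express `Tor₁(A, M) = 0`, computed from a presentation of `M`, resp. of
`A`; this is the balancing of `Tor₁`. -/
theorem rTensor_ker_subtype_injective_of_lTensor {P₀ A S₀ M : Type*}
    [AddCommGroup P₀] [Module R P₀] [AddCommGroup A] [Module R A]
    [AddCommGroup S₀] [Module R S₀] [AddCommGroup M] [Module R M] [Module.Flat R S₀]
    {π : P₀ →ₗ[R] A} (hπ : Function.Surjective π) {σ : S₀ →ₗ[R] M} (hσ : Function.Surjective σ)
    (h : Function.Injective ((ker σ).subtype.lTensor A)) :
    Function.Injective ((ker π).subtype.rTensor M) := by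
  set ιK := (ker π).subtype
  set ιL := (ker σ).subtype
  refine (injective_iff_map_eq_zero _).mpr fun w hw => ?_
  obtain ⟨u, rfl⟩ := lTensor_surjective (ker π) hσ w
  have hu : ιK.rTensor S₀ u ∈ ker (σ.lTensor P₀) := by
    rwa [mem_ker, ← rTensor_lTensor_comm]
  rw [(lTensor_exact P₀ (exact_subtype_ker_map σ) hσ).linearMap_ker_eq] at hu
  obtain ⟨v, hv⟩ := hu
  have hv₀ : π.rTensor (ker σ) v ∈ ker (ιL.lTensor A) := by
    rw [mem_ker, ← rTensor_lTensor_comm, hv, ← rTensor_comp_apply,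
      (exact_subtype_ker_map π).linearMap_comp_eq_zero, rTensor_zero, LinearMap.zero_apply]
  rw [ker_eq_bot.mpr h, Submodule.mem_bot, ← mem_ker,
    (rTensor_exact (ker σ) (exact_subtype_ker_map π) hπ).linearMap_ker_eq] at hv₀
  obtain ⟨t, rfl⟩ := hv₀
  have hut : u = ιL.lTensor (ker π) t :=
    Module.Flat.rTensor_preserves_injective_linearMap _ (ker π).injective_subtype <| by
      rw [← hv, rTensor_lTensor_comm]
  rw [hut, ← lTensor_comp_apply, (exact_subtype_ker_map σ).linearMap_comp_eq_zero, lTensor_zero,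
    LinearMap.zero_apply]

end LinearAlgebra

section Restriction

variable {R : Type*} [CommRing R] {K F K' F' Y Y' : Type*}
  [AddCommGroup K] [Module R K] [AddCommGroup F] [Module R F]
  [AddCommGroup K'] [Module R K'] [AddCommGroup F'] [Module R F']
  [AddCommGroup Y] [Module R Y] [AddCommGroup Y'] [Module R Y']

/-- For `i` the inclusion of the kernel of a surjection `F → X`, this is `Ext¹(X, Y)` when `F`
is projective, and embeds into `Ext¹(X, Y)` in general. -/
abbrev RestrictionCoker (i : K →ₗ[R] F) (Y : Type*) [AddCommGroup Y] [Module R Y] : Type _ :=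
  (K →ₗ[R] Y) ⧸ range (i.lcomp R Y)

namespace RestrictionCoker

def congr {i : K →ₗ[R] F} {i' : K' →ₗ[R] F'}
    (eK : (K →ₗ[R] Y) ≃ₗ[R] (K' →ₗ[R] Y')) (eF : (F →ₗ[R] Y) ≃ₗ[R] (F' →ₗ[R] Y'))
    (h : eK.toLinearMap ∘ₗ i.lcomp R Y = i'.lcomp R Y' ∘ₗ eF.toLinearMap) :
    RestrictionCoker i Y ≃ₗ[R] RestrictionCoker i' Y' :=
  Submodule.Quotient.equiv _ _ eK <| by
    rw [← range_comp, h, range_comp_of_range_eq_top _ eF.range]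

def congrLeft {i : K →ₗ[R] F} {i' : K' →ₗ[R] F} (e : K ≃ₗ[R] K') (h : i' ∘ₗ e.toLinearMap = i) :
    RestrictionCoker i Y ≃ₗ[R] RestrictionCoker i' Y :=
  congr (e.arrowCongr (LinearEquiv.refl R Y)) (LinearEquiv.refl R _) <| by
    ext; simp [← h]

def curryEquiv (i : K →ₗ[R] F) (M : Type*) [AddCommGroup M] [Module R M] :
    RestrictionCoker i (M →ₗ[R] Y) ≃ₗ[R] RestrictionCoker (i.rTensor M) Y :=
  congr (TensorProduct.lift.equiv (RingHom.id R) K M Y)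
    (TensorProduct.lift.equiv (RingHom.id R) F M Y) <| by
    ext; rfl

/-- `RestrictionCoker i Y` is the cohomology of `Hom(F, Y) → Hom(C₁, Y) → Hom(C₂, Y)` when
`C₂ → C₁ → K → 0` is exact. -/
def equivHomology {C₂ C₁ : Type*} [AddCommGroup C₂] [Module R C₂] [AddCommGroup C₁]
    [Module R C₁] {d : C₂ →ₗ[R] C₁} {q : C₁ →ₗ[R] K} (hq : Function.Surjective q)
    (hdq : Function.Exact d q) (i : K →ₗ[R] F) :
    RestrictionCoker i Y ≃ₗ[R] ker (d.lcomp R Y) ⧸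
      range (((i ∘ₗ q).lcomp R Y).codRestrict (ker (d.lcomp R Y)) fun β =>
        mem_ker.mpr <| LinearMap.congr_fun (lcomp_comp_lcomp_eq_zero <| by
          rw [comp_assoc, hdq.linearMap_comp_eq_zero, LinearMap.comp_zero]) β) :=
  let θ := LinearEquiv.ofInjective _ (lcomp_injective_of_surjective (S := R) (N := Y) q hq) ≪≫ₗ
    LinearEquiv.ofEq _ _ (exact_lcomp_of_exact_of_surjective Y hdq hq).linearMap_ker_eq.symm
  Submodule.Quotient.equiv _ _ θ <| by
    rw [← range_comp]
    rfl

def map {i : K →ₗ[R] F} {i' : K' →ₗ[R] F'} (g : K' →ₗ[R] K) (f : F' →ₗ[R] F)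
    (h : i ∘ₗ g = f ∘ₗ i') : RestrictionCoker i Y →ₗ[R] RestrictionCoker i' Y :=
  Submodule.mapQ _ _ (g.lcomp R Y) <| by
    rintro _ ⟨χ, rfl⟩
    exact ⟨χ ∘ₗ f, by simp only [lcomp_apply', comp_assoc, h]⟩

theorem map_injective {X Q : Type*} [AddCommGroup X] [Module R X] [AddCommGroup Q] [Module R Q]
    {p : F →ₗ[R] X} {π : Q →ₗ[R] X} {f : Q →ₗ[R] F} {g : ker π →ₗ[R] ker p}
    (hπ : Function.Surjective π) (hf : p ∘ₗ f = π)
    (hg : (ker p).subtype ∘ₗ g = f ∘ₗ (ker π).subtype) :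
    Function.Injective (map (Y := Y) g f hg) := by
  refine (injective_iff_map_eq_zero _).mpr fun x hx => ?_
  obtain ⟨φ, rfl⟩ := Submodule.Quotient.mk_surjective _ x
  obtain ⟨β, hβ⟩ := (Submodule.Quotient.mk_eq_zero _).mp hx
  obtain ⟨χ, hχ⟩ := exists_comp_ker_subtype_eq hπ hf hg hβ
  exact (Submodule.Quotient.mk_eq_zero _).mpr ⟨χ, hχ⟩

end RestrictionCoker

end Restriction

section Homological

variable {R : Type u} [CommRing R]

namespace CategoryTheory.ProjectiveResolution

variable {X : ModuleCat.{u} R} (P : ProjectiveResolution X)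

def extOneEquiv (Y : ModuleCat.{u} R) :
    extModule R 1 X Y ≃ₗ[R] RestrictionCoker (ker (P.π.f 0).hom).subtype Y :=
  let hd₁ := P.exact₀.moduleCat_range_eq_ker
  let q := (P.complex.d 1 0).hom.codRestrict _ fun x => hd₁ ▸ mem_range_self _ x
  have hdq : Function.Exact (P.complex.d 2 1).hom q := by
    rw [LinearMap.exact_iff, ker_codRestrict]
    exact (P.exact_succ 0).moduleCat_range_eq_ker.symm
  let S := ShortComplex.moduleCatMk ((P.complex.d 1 0).hom.lcomp R Y)
    ((P.complex.d 2 1).hom.lcomp R Y)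
    (lcomp_comp_lcomp_eq_zero (congrArg ModuleCat.Hom.hom (P.complex.d_comp_d 2 1 0)))
  let e : (P.complex.linearYonedaObj R Y).sc' 0 1 2 ≅ S :=
    ShortComplex.isoMk ModuleCat.homLinearEquiv.toModuleIso
      ModuleCat.homLinearEquiv.toModuleIso ModuleCat.homLinearEquiv.toModuleIso
  let E : extModule R 1 X Y ≅ S.moduleCatLeftHomologyData.H := P.isoExt 1 Y ≪≫
    ShortComplex.homologyMapIso ((P.complex.linearYonedaObj R Y).isoSc' 0 1 2 (by simp) (by simp)
      ≪≫ e) ≪≫ S.moduleCatHomologyIso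
  E.toLinearEquiv ≪≫ₗ (RestrictionCoker.equivHomology
    (codRestrict_surjective_of_range_eq hd₁ _) hdq (ker (P.π.f 0).hom).subtype).symm

end CategoryTheory.ProjectiveResolution

theorem rTensor_ker_subtype_injective_of_isZero_tor {A M : ModuleCat.{u} R}
    (hTor : IsZero (((Tor (ModuleCat.{u} R) 1).obj A).obj M)) {P₀ : Type*} [AddCommGroup P₀]
    [Module R P₀] {π : P₀ →ₗ[R] A} (hπ : Function.Surjective π) :
    Function.Injective ((ker π).subtype.rTensor M) := by
  obtain ⟨S⟩ := HasProjectiveResolution.out (Z := M)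
  let T := ((MonoidalCategory.tensoringLeft (ModuleCat.{u} R)).obj A).mapHomologicalComplex
    (ComplexShape.down ℕ) |>.obj S.complex
  have hT : (T.sc' 2 1 0).Exact := (T.exactAt_iff' 2 1 0 (by simp) (by simp)).mp <|
    (T.exactAt_iff_isZero_homology 1).mpr (hTor.of_iso (S.isoLeftDerivedObj _ 1).symm)
  refine rTensor_ker_subtype_injective_of_lTensor hπ
    ((ModuleCat.epi_iff_surjective (S.π.f 0)).mp inferInstance) ?_
  exact lTensor_ker_subtype_injective_of_ker_le_range S.exact₀.moduleCat_range_eq_ker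
    (congrArg ModuleCat.Hom.hom (S.complex.d_comp_d 2 1 0))
    ((ShortComplex.moduleCat_exact_iff_ker_sub_range _).mp hT)

theorem exists_injective_restrictionCoker_to_extOne {X : Type u} [AddCommGroup X] [Module R X]
    {Y : ModuleCat.{u} R} {F : Type*} [AddCommGroup F] [Module R F] {p : F →ₗ[R] X}
    (hp : Function.Surjective p) :
    ∃ ι : RestrictionCoker (ker p).subtype Y →ₗ[R] extModule R 1 (ModuleCat.of R X) Y,
      Function.Injective ι := by
  obtain ⟨Q⟩ := HasProjectiveResolution.out (Z := ModuleCat.of R X)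
  have hπ : Function.Surjective (Q.π.f 0).hom := (ModuleCat.epi_iff_surjective _).mp inferInstance
  obtain ⟨f, hf⟩ := Module.projective_lifting_property p (Q.π.f 0).hom hp
  let g : ker (Q.π.f 0).hom →ₗ[R] ker p :=
    f.restrict fun x hx => by rwa [mem_ker, ← LinearMap.comp_apply, hf]
  exact ⟨(Q.extOneEquiv Y).symm.toLinearMap ∘ₗ RestrictionCoker.map g f rfl,
    (Q.extOneEquiv Y).symm.injective.comp (RestrictionCoker.map_injective hπ hf rfl)⟩

end Homological

theorem ext_one_hom_localCohomology_injective_into_ext_one_quotient_general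
    (R : Type u) [CommRing R] (I : Ideal R)
    (M : Type u) [AddCommGroup M] [Module R M]
    (hTor : ∀ i : ℕ, 0 < i →
      IsZero (((Tor (ModuleCat.{u} R) i).obj (ModuleCat.of R (R ⧸ I))).obj (ModuleCat.of R M)))
    (N : ModuleCat.{u} R) :
    ∃ f : extModule R 1 (ModuleCat.of R (R ⧸ I))
            (ModuleCat.of R (M →ₗ[R] ((localCohomology I 1).obj N))) →ₗ[R]
          extModule R 1 (ModuleCat.of R (M ⧸ (I • (⊤ : Submodule R M))))
            ((localCohomology I 1).obj N),
      Function.Injective f := by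
  obtain ⟨P⟩ := HasProjectiveResolution.out (Z := ModuleCat.of R (R ⧸ I))
  set π := (P.π.f 0).hom
  have hπ : Function.Surjective π := (ModuleCat.epi_iff_surjective _).mp inferInstance
  let p := (TensorProduct.quotTensorEquivQuotSMul M I).toLinearMap ∘ₗ π.rTensor M
  have hp : Function.Surjective p :=
    (TensorProduct.quotTensorEquivQuotSMul M I).surjective.comp (rTensor_surjective M hπ)
  have hexact : Function.Exact ((ker π).subtype.rTensor M) p :=
    LinearEquiv.postcomp_exact_iff_exact.mpr (rTensor_exact M (exact_subtype_ker_map π) hπ)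
  let e : ker π ⊗[R] M ≃ₗ[R] ker p :=
    LinearEquiv.ofInjective _ (rTensor_ker_subtype_injective_of_isZero_tor (hTor 1 one_pos) hπ) ≪≫ₗ
      LinearEquiv.ofEq _ _ hexact.linearMap_ker_eq.symm
  obtain ⟨ι, hι⟩ :=
    exists_injective_restrictionCoker_to_extOne (Y := (localCohomology I 1).obj N) hp
  let E := P.extOneEquiv (ModuleCat.of R (M →ₗ[R] (localCohomology I 1).obj N)) ≪≫ₗ
    RestrictionCoker.curryEquiv _ M ≪≫ₗ RestrictionCoker.congrLeft (i' := (ker p).subtype) e rfl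
  exact ⟨ι ∘ₗ E.toLinearMap, hι.comp E.injective⟩

/-- Let `R` be a commutative Noetherian ring, `I` a proper ideal, `M` a
finitely generated `R`-module with `Tor_i^R(R/I, M) = 0` for all `i > 0`, and `N` an
`R`-module with `depth_I N > 0`, i.e. `H^0_I(N) = 0`. Then `Ext^1_R(R/I, Hom_R(M, H^1_I(N)))`
embeds into `Ext^1_R(M/IM, H^1_I(N))`. -/
theorem ext_one_hom_localCohomology_injective_into_ext_one_quotient
    (R : Type u) [CommRing R] [IsNoetherianRing R] (I : Ideal R) (hI : I ≠ ⊤)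
    (M : Type u) [AddCommGroup M] [Module R M] [Module.Finite R M]
    (hTor : ∀ i : ℕ, 0 < i →
      IsZero (((Tor (ModuleCat.{u} R) i).obj (ModuleCat.of R (R ⧸ I))).obj (ModuleCat.of R M)))
    (N : ModuleCat.{u} R)
    (hdepth : IsZero ((localCohomology I 0).obj N)) :
    ∃ f : extModule R 1 (ModuleCat.of R (R ⧸ I))
            (ModuleCat.of R (M →ₗ[R] ((localCohomology I 1).obj N))) →ₗ[R]
          extModule R 1 (ModuleCat.of R (M ⧸ (I • (⊤ : Submodule R M))))
            ((localCohomology I 1).obj N),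
      Function.Injective f :=
  ext_one_hom_localCohomology_injective_into_ext_one_quotient_general R I M hTor N

end
end

section
/- Let k be an infinite field, n ≥ 2 an integer, and R = k[x₁, …, xₙ] the polynomial ring. For each λ ∈ k* = k \ {0}, let T^λ = k[x₁]_{x₁−λ} be the localization of k[x₁] obtained by inverting the element x₁ − λ, regarded as an R-module via the k-algebra surjection R → k[x₁] sending x₁ ↦ x₁ and xᵢ ↦ 0 for 2 ≤ i ≤ n, and let R_{x₁} be the localization of R inverting x₁. Set N = (⊕_{λ ∈ k*} T^λ) ⊕ R_{x₁} and L = (⊕_{λ ∈ k*} k[x₁]) ⊕ R, viewed as an R-submodule of N via the canonical localization maps. Then for every λ ∈ k* the maximal ideal m_λ = (x₁ − λ, x₂, …, xₙ) belongs to Ass_R(N/L); in particular Ass_R(N/L) is infinite, and hence N is not a weakly Laskerian R-module. -/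
/-!
Fix `λ ≠ 0` and let `z ∈ N` be `1/(x₁ - λ)` placed in the `λ`-summand. The generators of `m_λ`
move `z` into `L`: `x₁ - λ` sends it to the image of `1`, and `x₂, …, xₙ` act by zero on `T^λ`.
Yet `z ∉ L`, because the `λ`-component of `L` lies in `k[x₁] ⊆ T^λ` and `x₁ - λ` is not a unit of
`k[x₁]`. As `m_λ` is maximal, it is therefore the annihilator of the class of `z` in `N/L`.
Distinct `λ` give distinct `m_λ`, and `k*` is infinite.
-/

set_option synthInstance.maxHeartbeats 200000

universe u

noncomputable section

open Polynomial
open scoped DirectSum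

def projPoly (k : Type) [Field k] (n : ℕ) : MvPolynomial (Fin n) k →+* Polynomial k :=
  (MvPolynomial.aeval fun i : Fin n => if (i : ℕ) = 0 then (X : Polynomial k) else 0).toRingHom

abbrev Tloc (k : Type) [Field k] (lam : k) : Type :=
  Localization.Away (X - C lam : Polynomial k)

instance instModuleTloc (k : Type) [Field k] (n : ℕ) (lam : k) :
    Module (MvPolynomial (Fin n) k) (Tloc k lam) :=
  Module.compHom _ ((algebraMap (Polynomial k) (Tloc k lam)).comp (projPoly k n))

abbrev bigN (k : Type) [Field k] (n : ℕ) [NeZero n] : Type :=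
  (⨁ lam : {x : k // x ≠ 0}, Tloc k lam.val) ×
    Localization.Away (MvPolynomial.X (0 : Fin n) : MvPolynomial (Fin n) k)

/-- The image of `k[x₁]` in `T^λ` is the `R`-submodule generated by `1`, and likewise for `R` in
`R_{x₁}`. -/
def bigL (k : Type) [Field k] (n : ℕ) [NeZero n] : Submodule (MvPolynomial (Fin n) k) (bigN k n) :=
  letI := Classical.decEq {x : k // x ≠ 0}
  Submodule.span (MvPolynomial (Fin n) k)
    ((Set.range fun lam : {x : k // x ≠ 0} =>
        ((DirectSum.of (fun l : {x : k // x ≠ 0} => Tloc k l.val) lam (1 : Tloc k lam.val), 0) :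
          bigN k n)) ∪
      {((0, 1) : bigN k n)})

def mIdeal (k : Type) [Field k] (n : ℕ) [NeZero n] (lam : k) : Ideal (MvPolynomial (Fin n) k) :=
  Ideal.span ({MvPolynomial.X 0 - MvPolynomial.C lam} ∪
    Set.range fun i : {j : Fin n // j ≠ 0} => (MvPolynomial.X i.val : MvPolynomial (Fin n) k))

theorem isAssociatedPrime_quotient_of_isMaximal {R M : Type*} [CommRing R] [AddCommGroup M]
    [Module R M] {N : Submodule R M} {I : Ideal R} (hI : I.IsMaximal) {x : M} (hx : x ∉ N)
    (hI_smul : ∀ r ∈ I, r • x ∈ N) : IsAssociatedPrime I (M ⧸ N) := by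
  have hcolon (r : R) : r ∈ (⊥ : Submodule R (M ⧸ N)).colon {N.mkQ x} ↔ r • x ∈ N := by
    rw [Submodule.mem_colon_singleton, Submodule.mem_bot, ← map_smul, Submodule.mkQ_apply,
      Submodule.Quotient.mk_eq_zero]
  have heq : I = (⊥ : Submodule R (M ⧸ N)).colon {N.mkQ x} :=
    hI.eq_of_le (fun htop => hx (by simpa using (hcolon 1).1 (htop ▸ Submodule.mem_top)))
      fun r hr => (hcolon r).2 (hI_smul r hr)
  exact ⟨hI.isPrime, _, by rw [← heq, hI.isPrime.radical]⟩

theorem IsLocalization.Away.invSelf_notMem_range {A S : Type*} [CommRing A] [IsDomain A]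
    [CommRing S] [Algebra A S] {f : A} [IsLocalization.Away f S] (hf : f ≠ 0)
    (hu : ¬IsUnit f) : IsLocalization.Away.invSelf (S := S) f ∉ (algebraMap A S).range := by
  rintro ⟨a, ha⟩
  have hinj := IsLocalization.injective S (powers_le_nonZeroDivisors_of_noZeroDivisors hf)
  exact hu (IsUnit.of_mul_eq_one a (hinj (by rw [map_mul, ha, mul_invSelf, map_one])))

namespace MvPolynomial

variable {R σ : Type*} [CommRing R]

theorem sub_C_eval_mem_span_X_sub_C (x : σ → R) (p : MvPolynomial σ R) :
    p - C (eval x p) ∈ Ideal.span (Set.range fun i => X i - C (x i)) := by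
  induction p using MvPolynomial.induction_on with
  | C a => simp
  | add p q hp hq => simpa [sub_add_sub_comm] using add_mem hp hq
  | mul_X p i hp =>
    have hi : X i - C (x i) ∈ Ideal.span (Set.range fun i => X i - C (x i)) :=
      Ideal.subset_span ⟨i, rfl⟩
    have hsplit : p * X i - C (eval x (p * X i)) =
        (p - C (eval x p)) * X i + C (eval x p) * (X i - C (x i)) := by
      simp only [eval_X, map_mul]
      ring
    rw [hsplit]
    exact add_mem (Ideal.mul_mem_right _ _ hp) (Ideal.mul_mem_left _ _ hi)

theorem ker_eval_eq_span_X_sub_C (x : σ → R) :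
    RingHom.ker (eval x) = Ideal.span (Set.range fun i => X i - C (x i)) := by
  refine le_antisymm (fun p hp => ?_) ?_
  · simpa [RingHom.mem_ker.1 hp] using sub_C_eval_mem_span_X_sub_C x p
  · rw [Ideal.span_le]
    rintro _ ⟨i, rfl⟩
    simp

end MvPolynomial

section

variable (k : Type) [Field k] (n : ℕ)

theorem Tloc.smul_def (lam : k) (r : MvPolynomial (Fin n) k) (t : Tloc k lam) :
    r • t = algebraMap k[X] (Tloc k lam) (projPoly k n r) * t :=
  rfl

theorem invSelf_notMem_span_one (lam : k) :
    IsLocalization.Away.invSelf (X - C lam) ∉ (MvPolynomial (Fin n) k) ∙ (1 : Tloc k lam) := by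
  intro hmem
  obtain ⟨r, hr⟩ := Submodule.mem_span_singleton.1 hmem
  rw [Tloc.smul_def, mul_one] at hr
  exact IsLocalization.Away.invSelf_notMem_range (X_sub_C_ne_zero lam) (not_isUnit_X_sub_C lam)
    ⟨projPoly k n r, hr⟩

variable [NeZero n]

theorem mIdeal_eq_ker_eval (lam : k) :
    mIdeal k n lam = RingHom.ker (MvPolynomial.eval (Pi.single 0 lam)) := by
  rw [MvPolynomial.ker_eval_eq_span_X_sub_C, mIdeal]
  congr 1
  ext p
  constructor
  · rintro (rfl | ⟨⟨i, hi⟩, rfl⟩)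
    · exact ⟨0, by simp⟩
    · exact ⟨i, by simp [hi]⟩
  · rintro ⟨i, rfl⟩
    by_cases hi : i = 0
    · subst hi
      left
      simp
    · right
      exact ⟨⟨i, hi⟩, by simp [hi]⟩

theorem mIdeal_isMaximal (lam : k) : (mIdeal k n lam).IsMaximal := by
  rw [mIdeal_eq_ker_eval]
  exact RingHom.ker_isMaximal_of_surjective _ fun c => ⟨MvPolynomial.C c, MvPolynomial.eval_C c⟩

theorem mIdeal_injective : Function.Injective (mIdeal k n) := by
  intro a b hab
  have ha : (MvPolynomial.X 0 - MvPolynomial.C a : MvPolynomial (Fin n) k) ∈ mIdeal k n b :=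
    hab ▸ Ideal.subset_span (Or.inl rfl)
  rw [mIdeal_eq_ker_eval, RingHom.mem_ker] at ha
  simpa [sub_eq_zero, eq_comm] using ha

variable (lam : {x : k // x ≠ 0})

def singleN : Tloc k lam.val →ₗ[MvPolynomial (Fin n) k] bigN k n :=
  letI := Classical.decEq {x : k // x ≠ 0}
  (LinearMap.inl _ _ _).comp (DirectSum.lof _ _ (fun l : {x : k // x ≠ 0} => Tloc k l.val) lam)

def projN : bigN k n →ₗ[MvPolynomial (Fin n) k] Tloc k lam.val :=
  letI := Classical.decEq {x : k // x ≠ 0}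
  (DirectSum.component _ _ (fun l : {x : k // x ≠ 0} => Tloc k l.val) lam).comp
    (LinearMap.fst _ _ _)

theorem singleN_one_mem_bigL : singleN k n lam 1 ∈ bigL k n :=
  Submodule.subset_span (Or.inl ⟨lam, rfl⟩)

theorem projN_singleN_self (t : Tloc k lam.val) : projN k n lam (singleN k n lam t) = t :=
  letI := Classical.decEq {x : k // x ≠ 0}
  DirectSum.component.lof_self (MvPolynomial (Fin n) k)
    (M := fun l : {x : k // x ≠ 0} => Tloc k l.val) lam t

theorem projN_singleN_of_ne {mu : {x : k // x ≠ 0}} (h : mu ≠ lam) (t : Tloc k mu.val) :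
    projN k n lam (singleN k n mu t) = 0 :=
  letI := Classical.decEq {x : k // x ≠ 0}
  (DirectSum.component.of (MvPolynomial (Fin n) k)
    (M := fun l : {x : k // x ≠ 0} => Tloc k l.val) lam mu t).trans (dif_neg h)

theorem bigL_le_comap_projN :
    bigL k n ≤ ((MvPolynomial (Fin n) k) ∙ (1 : Tloc k lam.val)).comap (projN k n lam) := by
  rw [bigL, Submodule.span_le]
  rintro _ (⟨mu, rfl⟩ | rfl) <;> rw [SetLike.mem_coe, Submodule.mem_comap]
  · change projN k n lam (singleN k n mu 1) ∈ _
    rcases eq_or_ne mu lam with rfl | h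
    · rw [projN_singleN_self]
      exact Submodule.mem_span_singleton_self _
    · rw [projN_singleN_of_ne k n lam h]
      exact zero_mem _
  · rw [show projN k n lam (0, 1) = 0 from
      map_zero (DirectSum.component (MvPolynomial (Fin n) k) _
        (fun l : {x : k // x ≠ 0} => Tloc k l.val) lam)]
    exact zero_mem _

def singleInvSelf : bigN k n :=
  singleN k n lam (IsLocalization.Away.invSelf (X - C lam.val))

theorem singleInvSelf_notMem_bigL : singleInvSelf k n lam ∉ bigL k n := fun hmem => by
  have hproj := bigL_le_comap_projN k n lam hmem
  rw [Submodule.mem_comap, singleInvSelf, projN_singleN_self] at hproj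
  exact invSelf_notMem_span_one k n lam.val hproj

theorem smul_singleInvSelf_mem_bigL {r : MvPolynomial (Fin n) k} (hr : r ∈ mIdeal k n lam.val) :
    r • singleInvSelf k n lam ∈ bigL k n := by
  suffices mIdeal k n lam.val ≤ (bigL k n).colon {singleInvSelf k n lam} from
    Submodule.mem_colon_singleton.1 (this hr)
  rw [mIdeal, Ideal.span_le]
  rintro _ (rfl | ⟨⟨i, hi⟩, rfl⟩) <;>
    rw [SetLike.mem_coe, Submodule.mem_colon_singleton, singleInvSelf, ← map_smul, Tloc.smul_def]
  · have hproj : projPoly k n (MvPolynomial.X 0 - MvPolynomial.C lam.val) = X - C lam.val := by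
      simp [projPoly]
    rw [hproj, IsLocalization.Away.mul_invSelf]
    exact singleN_one_mem_bigL k n lam
  · have hproj : projPoly k n (MvPolynomial.X i) = 0 := by
      simp [projPoly, hi]
    rw [hproj, map_zero, zero_mul, map_zero]
    exact zero_mem _

end

theorem mIdeal_mem_associatedPrimes_and_not_isWeaklyLaskerian_general
    (k : Type) [Field k] [Infinite k] (n : ℕ) [NeZero n] :
    (∀ lam : k, lam ≠ 0 →
      mIdeal k n lam ∈
        associatedPrimes (MvPolynomial (Fin n) k) (bigN k n ⧸ bigL k n)) ∧
    (associatedPrimes (MvPolynomial (Fin n) k) (bigN k n ⧸ bigL k n)).Infinite ∧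
    ¬ IsWeaklyLaskerian (MvPolynomial (Fin n) k) (bigN k n) := by
  have hmem (lam : k) (hl : lam ≠ 0) :
      mIdeal k n lam ∈ associatedPrimes (MvPolynomial (Fin n) k) (bigN k n ⧸ bigL k n) :=
    isAssociatedPrime_quotient_of_isMaximal (mIdeal_isMaximal k n lam)
      (singleInvSelf_notMem_bigL k n ⟨lam, hl⟩) fun _ => smul_singleInvSelf_mem_bigL k n ⟨lam, hl⟩
  have hinf : (associatedPrimes (MvPolynomial (Fin n) k) (bigN k n ⧸ bigL k n)).Infinite :=
    have : Infinite {x : k // x ≠ 0} := (Set.finite_singleton (0 : k)).infinite_compl.to_subtype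
    Set.infinite_of_injective_forall_mem ((mIdeal_injective k n).comp Subtype.val_injective)
      fun lam : {x : k // x ≠ 0} => hmem lam lam.2
  exact ⟨hmem, hinf, fun h => hinf (h (bigL k n))⟩

/-- Let `k` be an infinite field, `n ≥ 2`, `R = k[x₁, …, xₙ]`,
`N = (⊕_{λ ∈ k*} k[x₁]_{x₁−λ}) ⊕ R_{x₁}` and `L = (⊕_{λ ∈ k*} k[x₁]) ⊕ R ⊆ N`. Then for
every `λ ∈ k*` the maximal ideal `m_λ = (x₁ − λ, x₂, …, xₙ)` is an associated prime of
`N/L`; in particular `Ass_R(N/L)` is infinite and `N` is not weakly Laskerian. -/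
theorem mIdeal_mem_associatedPrimes_and_not_isWeaklyLaskerian
    (k : Type) [Field k] [Infinite k] (n : ℕ) [NeZero n] (hn : 2 ≤ n) :
    (∀ lam : k, lam ≠ 0 →
      mIdeal k n lam ∈
        associatedPrimes (MvPolynomial (Fin n) k) (bigN k n ⧸ bigL k n)) ∧
    (associatedPrimes (MvPolynomial (Fin n) k) (bigN k n ⧸ bigL k n)).Infinite ∧
    ¬ IsWeaklyLaskerian (MvPolynomial (Fin n) k) (bigN k n) :=
  mIdeal_mem_associatedPrimes_and_not_isWeaklyLaskerian_general k n
end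
end
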